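/- arXiv:1401.0892 — 5 statements merged into one kernel-verified Lean document; each statement's English description precedes it below -/
import Mathlib

section
/- Let P and Q be probability mass functions on a finite alphabet X with full support, and P ≠ Q. For α ∈ [0,1] define Q_α = (1-α)P + αQ. Then for any 0 < α₁ < α₂ ≤ 1, the Kullback–Leibler divergence satisfies D(Q_{α₁} ‖ P) < D(Q_{α₂} ‖ P); that is, α ↦ D(Q_α ‖ P) is strictly increasing on (0,1]. -/
/-!
Since `∑ R = ∑ P`, the divergence `D(R ‖ P)` equals `∑ₓ P x · klFun (R x / P x)` with
`klFun y = y log y + 1 - y`. Along the segment, `Q_α x / P x = 1 - α + α · (Q x / P x)` is an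
affine function of `α` starting at `1`, where the strictly convex `klFun` attains its minimum `0`.
Hence each summand is nondecreasing in `α`, and strictly increasing wherever `Q x ≠ P x`.
-/

open Finset InformationTheory

theorem sum_mul_log_div_eq_sum_mul_klFun {X : Type*} [Fintype X] (P R : X → ℝ)
    (hP : ∀ x, P x ≠ 0) (hsum : ∑ x, R x = ∑ x, P x) :
    ∑ x, R x * Real.log (R x / P x) = ∑ x, P x * klFun (R x / P x) := by
  have hterm : ∀ x, P x * klFun (R x / P x) = R x * Real.log (R x / P x) + (P x - R x) := by
    intro x
    rw [klFun_apply]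
    field_simp [hP x]
    ring
  simp only [hterm, sum_add_distrib, sum_sub_distrib, hsum, sub_self, add_zero]

theorem strictMonoOn_klFun_one_sub_add_mul {y : ℝ} (hy : 0 ≤ y) (hy1 : y ≠ 1) :
    StrictMonoOn (fun α => klFun (1 - α + α * y)) (Set.Ioc 0 1) := by
  rintro a ⟨ha, -⟩ b ⟨hb, hb1⟩ hab
  set z := 1 - b + b * y
  have hz : 0 ≤ z := by nlinarith
  have hz1 : (1 : ℝ) ≠ z := by
    intro h
    have hprod : b * (y - 1) = 0 := by linarith
    exact hy1 (sub_eq_zero.1 ((mul_eq_zero.1 hprod).resolve_left hb.ne'))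
  have hmix : 1 - a + a * y = (1 - a / b) • (1 : ℝ) + (a / b) • z := by
    simp only [z, smul_eq_mul]
    field_simp
    ring
  have hlt := strictConvexOn_klFun.lt_on_open_segment' (Set.mem_Ici.2 zero_le_one)
    (Set.mem_Ici.2 hz) hz1 (sub_pos.2 ((div_lt_one hb).2 hab)) (div_pos ha hb)
    (sub_add_cancel _ _)
  rwa [← hmix, klFun_one, max_eq_right (klFun_nonneg hz)] at hlt

theorem stmt_0_general {X : Type*} [Fintype X]
    (P Q : X → ℝ) (hP : ∀ x, 0 < P x) (hQ : ∀ x, 0 < Q x)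
    (hPsum : ∑ x, P x = 1) (hQsum : ∑ x, Q x = 1) (hPQ : P ≠ Q)
    (α₁ α₂ : ℝ) (h1 : 0 < α₁) (h12 : α₁ < α₂) (h2 : α₂ ≤ 1) :
    ∑ x, ((1 - α₁) * P x + α₁ * Q x) *
        Real.log (((1 - α₁) * P x + α₁ * Q x) / P x)
      < ∑ x, ((1 - α₂) * P x + α₂ * Q x) *
        Real.log (((1 - α₂) * P x + α₂ * Q x) / P x) := by
  have hdiv : ∀ α x, ((1 - α) * P x + α * Q x) / P x = 1 - α + α * (Q x / P x) := by
    intro α x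
    field_simp [(hP x).ne']
  have hsum : ∀ α, ∑ x, ((1 - α) * P x + α * Q x) = ∑ x, P x := by
    intro α
    simp only [sum_add_distrib, ← mul_sum, hPsum, hQsum]
    ring
  rw [sum_mul_log_div_eq_sum_mul_klFun P _ (fun x => (hP x).ne') (hsum α₁),
    sum_mul_log_div_eq_sum_mul_klFun P _ (fun x => (hP x).ne') (hsum α₂)]
  simp only [hdiv]
  have hmem₁ : α₁ ∈ Set.Ioc (0 : ℝ) 1 := ⟨h1, h12.le.trans h2⟩
  have hmem₂ : α₂ ∈ Set.Ioc (0 : ℝ) 1 := ⟨h1.trans h12, h2⟩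
  have hlt : ∀ x, Q x / P x ≠ 1 → P x * klFun (1 - α₁ + α₁ * (Q x / P x)) <
      P x * klFun (1 - α₂ + α₂ * (Q x / P x)) := fun x hx =>
    mul_lt_mul_of_pos_left (strictMonoOn_klFun_one_sub_add_mul
      (div_nonneg (hQ x).le (hP x).le) hx hmem₁ hmem₂ h12) (hP x)
  obtain ⟨x₀, hx₀⟩ : ∃ x, Q x / P x ≠ 1 := by
    by_contra! h
    exact hPQ (funext fun x => ((div_eq_one_iff_eq (hP x).ne').1 (h x)).symm)
  refine sum_lt_sum (fun x _ => ?_) ⟨x₀, mem_univ _, hlt x₀ hx₀⟩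
  rcases eq_or_ne (Q x / P x) 1 with hx | hx
  · simp only [hx, mul_one, sub_add_cancel, le_refl]
  · exact (hlt x hx).le

/-- Strict monotonicity of KL divergence along the segment from `P` to `Q`:
for PMFs `P ≠ Q` with full support on a finite alphabet, `α ↦ D((1-α)P+αQ ‖ P)`
is strictly increasing on `(0,1]`. -/
theorem stmt_0 {X : Type*} [Fintype X] [Nonempty X]
    (P Q : X → ℝ) (hP : ∀ x, 0 < P x) (hQ : ∀ x, 0 < Q x)
    (hPsum : ∑ x, P x = 1) (hQsum : ∑ x, Q x = 1) (hPQ : P ≠ Q)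
    (α₁ α₂ : ℝ) (h1 : 0 < α₁) (h12 : α₁ < α₂) (h2 : α₂ ≤ 1) :
    ∑ x, ((1 - α₁) * P x + α₁ * Q x) *
        Real.log (((1 - α₁) * P x + α₁ * Q x) / P x)
      < ∑ x, ((1 - α₂) * P x + α₂ * Q x) *
        Real.log (((1 - α₂) * P x + α₂ * Q x) / P x) :=
  stmt_0_general P Q hP hQ hPsum hQsum hPQ α₁ α₂ h1 h12 h2
end

section
/- Let A₁, …, A_K be pairwise independent events in a probability space. Then P(⋃_{k=1}^K A_k) ≥ (1/2)·min{1, ∑_{k=1}^K P(A_k)}. -/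
/-!
Let `N = ∑ 1_{A_k}` count the events that occur and `S = E N = ∑ P(A_k)`. Pairwise independence
gives the second-moment bound `E N² ≤ S + S²`. For every `t ≥ 0` one has pointwise
`2 t N ≤ 1_{⋃ A_k} + t² N²` (AM-GM where some `A_k` occurs, `0 ≤ 0` elsewhere); integrating with
`t = 1 / (1 + S)` yields `P(⋃ A_k) ≥ S / (1 + S) ≥ ½ min {1, S}`.
-/

open MeasureTheory ENNReal
open scoped NNReal

theorem ENNReal.two_mul_le_one_add_sq (a : ℝ≥0∞) : 2 * a ≤ 1 + a ^ 2 := by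
  rcases eq_or_ne a ⊤ with rfl | ha
  · simp
  lift a to ℝ≥0 using ha
  exact_mod_cast by simpa using two_mul_le_add_sq (1 : ℝ≥0) a

theorem ENNReal.half_mul_min_one_le_div_one_add {S : ℝ≥0∞} (hS : S ≠ ⊤) :
    1 / 2 * min 1 S ≤ S / (1 + S) := by
  lift S to ℝ≥0 using hS
  have h : 1 / 2 * min 1 S ≤ S / (1 + S) := by
    rw [← NNReal.coe_le_coe]
    push_cast
    rw [le_div_iff₀ (by positivity)]
    rcases min_cases (1 : ℝ) S with ⟨hm, h⟩ | ⟨hm, h⟩ <;> rw [hm] <;> nlinarith [S.coe_nonneg]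
  rw [← ENNReal.coe_le_coe] at h
  simpa [ENNReal.coe_div (by positivity : 1 + S ≠ 0)] using h

section CoverCount

variable {Ω ι : Type*} [Fintype ι] {A : ι → Set Ω}

noncomputable def coverCount (A : ι → Set Ω) (x : Ω) : ℝ≥0∞ := ∑ i, (A i).indicator 1 x

theorem coverCount_eq_zero_of_notMem_iUnion {x : Ω} (hx : x ∉ ⋃ i, A i) :
    coverCount A x = 0 :=
  Finset.sum_eq_zero fun i _ ↦ Set.indicator_of_notMem (fun h ↦ hx (Set.mem_iUnion_of_mem i h)) _

theorem coverCount_sq (x : Ω) : coverCount A x ^ 2 = ∑ i, ∑ j, (A i ∩ A j).indicator 1 x := by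
  simp only [coverCount, sq, Finset.sum_mul_sum, Set.inter_indicator_one, Pi.mul_apply]

theorem two_mul_coverCount_le (t : ℝ≥0∞) (x : Ω) :
    2 * (t * coverCount A x) ≤ (⋃ i, A i).indicator 1 x + (t * coverCount A x) ^ 2 := by
  by_cases hx : x ∈ ⋃ i, A i
  · simpa [Set.indicator_of_mem hx] using ENNReal.two_mul_le_one_add_sq (t * coverCount A x)
  · simp [coverCount_eq_zero_of_notMem_iUnion hx]

variable [MeasurableSpace Ω] (μ : Measure Ω)

theorem measurable_coverCount (hA : ∀ i, MeasurableSet (A i)) : Measurable (coverCount A) :=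
  Finset.measurable_sum _ fun i _ ↦ measurable_one.indicator (hA i)

theorem lintegral_coverCount (hA : ∀ i, MeasurableSet (A i)) :
    ∫⁻ x, coverCount A x ∂μ = ∑ i, μ (A i) := by
  simp only [coverCount]
  rw [lintegral_finsetSum _ fun i _ ↦ measurable_one.indicator (hA i)]
  simp only [lintegral_indicator_one (hA _)]

theorem lintegral_coverCount_sq (hA : ∀ i, MeasurableSet (A i)) :
    ∫⁻ x, coverCount A x ^ 2 ∂μ = ∑ i, ∑ j, μ (A i ∩ A j) := by
  have hAA : ∀ i j, MeasurableSet (A i ∩ A j) := fun i j ↦ (hA i).inter (hA j)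
  simp only [coverCount_sq]
  rw [lintegral_finsetSum _ fun i _ ↦ Finset.measurable_sum _ fun j _ ↦
    measurable_one.indicator (hAA i j)]
  refine Finset.sum_congr rfl fun i _ ↦ ?_
  rw [lintegral_finsetSum _ fun j _ ↦ measurable_one.indicator (hAA i j)]
  simp only [lintegral_indicator_one (hAA i _)]

theorem two_mul_mul_sum_measure_le (hA : ∀ i, MeasurableSet (A i)) (t : ℝ≥0∞) :
    2 * t * ∑ i, μ (A i) ≤ μ (⋃ i, A i) + t ^ 2 * ∑ i, ∑ j, μ (A i ∩ A j) := by
  have hN := measurable_coverCount hA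
  have hU : MeasurableSet (⋃ i, A i) := MeasurableSet.iUnion hA
  calc 2 * t * ∑ i, μ (A i) = ∫⁻ x, 2 * (t * coverCount A x) ∂μ := by
        rw [lintegral_const_mul _ (hN.const_mul t), lintegral_const_mul _ hN,
          lintegral_coverCount μ hA, mul_assoc]
    _ ≤ ∫⁻ x, (⋃ i, A i).indicator 1 x + (t * coverCount A x) ^ 2 ∂μ :=
        lintegral_mono (two_mul_coverCount_le t)
    _ = μ (⋃ i, A i) + t ^ 2 * ∑ i, ∑ j, μ (A i ∩ A j) := by
        simp only [mul_pow]
        rw [lintegral_add_left (measurable_one.indicator hU), lintegral_indicator_one hU,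
          lintegral_const_mul _ (hN.pow_const 2), lintegral_coverCount_sq μ hA]

theorem div_one_add_le_measure_iUnion (hA : ∀ i, MeasurableSet (A i))
    (hS : ∑ i, μ (A i) ≠ ⊤)
    (hpair : ∑ i, ∑ j, μ (A i ∩ A j) ≤ ∑ i, μ (A i) + (∑ i, μ (A i)) ^ 2) :
    (∑ i, μ (A i)) / (1 + ∑ i, μ (A i)) ≤ μ (⋃ i, A i) := by
  set S := ∑ i, μ (A i)
  set t := (1 + S)⁻¹
  have ht : t * (1 + S) = 1 := ENNReal.inv_mul_cancel (by simp) (by simp [hS])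
  have htS : t ^ 2 * (S + S ^ 2) = t * S := by
    calc t ^ 2 * (S + S ^ 2) = t * (t * (1 + S)) * S := by ring
      _ = t * S := by rw [ht, mul_one]
  have key : t * S + t * S ≤ μ (⋃ i, A i) + t * S :=
    calc t * S + t * S = 2 * t * S := by ring
      _ ≤ μ (⋃ i, A i) + t ^ 2 * ∑ i, ∑ j, μ (A i ∩ A j) := two_mul_mul_sum_measure_le μ hA t
      _ ≤ μ (⋃ i, A i) + t * S := by grw [hpair, htS]
  rw [div_eq_mul_inv, mul_comm]
  exact (ENNReal.add_le_add_iff_right (mul_ne_top (inv_ne_top.mpr (by simp)) hS)).mp key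

end CoverCount

theorem sum_sum_measure_inter_le_of_pairwise {Ω ι : Type*} [MeasurableSpace Ω] [Fintype ι]
    {μ : Measure Ω} {A : ι → Set Ω}
    (hind : Pairwise fun i j ↦ μ (A i ∩ A j) = μ (A i) * μ (A j)) :
    ∑ i, ∑ j, μ (A i ∩ A j) ≤ ∑ i, μ (A i) + (∑ i, μ (A i)) ^ 2 := by
  classical
  calc ∑ i, ∑ j, μ (A i ∩ A j)
        ≤ ∑ i, ∑ j, ((if i = j then μ (A i) else 0) + μ (A i) * μ (A j)) := by
        gcongr with i _ j _
        rcases eq_or_ne i j with rfl | hij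
        · simp
        · simp [hind hij, hij]
    _ = ∑ i, μ (A i) + (∑ i, μ (A i)) ^ 2 := by
        simp [Finset.sum_add_distrib, sq, Finset.sum_mul_sum]

/-- Tightness of the union bound: for pairwise independent events
`A₁, …, A_K`, `P(⋃ A_k) ≥ (1/2)·min{1, ∑ P(A_k)}`. -/
theorem stmt_1 {Ω : Type*} [MeasurableSpace Ω] (μ : Measure Ω)
    [IsProbabilityMeasure μ] (K : ℕ) (A : Fin K → Set Ω)
    (hA : ∀ k, MeasurableSet (A k))
    (hind : ∀ i j, i ≠ j → μ (A i ∩ A j) = μ (A i) * μ (A j)) :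
    (1 / 2 : ℝ≥0∞) * min 1 (∑ k, μ (A k)) ≤ μ (⋃ k, A k) := by
  have hS : ∑ k, μ (A k) ≠ ⊤ := ENNReal.sum_ne_top.mpr fun k _ ↦ measure_ne_top μ (A k)
  calc (1 / 2 : ℝ≥0∞) * min 1 (∑ k, μ (A k))
      ≤ (∑ k, μ (A k)) / (1 + ∑ k, μ (A k)) := ENNReal.half_mul_min_one_le_div_one_add hS
    _ ≤ μ (⋃ k, A k) :=
      div_one_add_le_measure_iUnion μ hA hS (sum_sum_measure_inter_le_of_pairwise hind)
end

section
/- Let Q and Q̄ be two types in P_n(X) (empirical distributions of length-n sequences over finite alphabet X) with total-variation distance ‖Q − Q̄‖ = 2d*/n for an integer d* > 0. Then for every x ∈ T_n(Q) (the type class of Q), there exists z ∈ T_n(Q̄) with Hamming distance d_H(x, z) ≤ d*. -/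
open Finset

/-- Empirical distribution of a length-`n` vector over a finite alphabet. -/
noncomputable def emp {X : Type*} [Fintype X] [DecidableEq X] {n : ℕ}
    (x : Fin n → X) (a : X) : ℝ :=
  ((Finset.univ.filter fun i => x i = a).card : ℝ) / n

/-! Compare letter counts instead of empirical distributions. While the counts of `x` differ
from those of a sequence `w ∈ T_n(Q̄)`, some letter `a` is in excess in `x` and some `b` in
deficit; rewriting one occurrence of `a` as `b` costs one unit of Hamming distance and lowers the
total excess `∑ (cₓ - c_w)⁺` by one. The total excess is half the `ℓ¹` distance of the counts,
which is `n ‖Q - Q̄‖ / 2 = d*`. -/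

theorem Finset.exists_lt_of_ne_of_sum_eq {α : Type*} {s : Finset α} {f g : α → ℕ}
    (hsum : ∑ a ∈ s, f a = ∑ a ∈ s, g a) (hne : ∃ a ∈ s, f a ≠ g a) : ∃ a ∈ s, f a < g a := by
  by_contra! hge
  obtain ⟨a, ha, hfg⟩ := hne
  exact hfg ((sum_eq_sum_iff_of_le hge).1 hsum.symm a ha).symm

theorem Finset.sum_abs_sub_eq_two_mul_sum_tsub {α R : Type*} [CommRing R] [LinearOrder R]
    [IsStrictOrderedRing R] {s : Finset α} {f g : α → ℕ} (hsum : ∑ a ∈ s, f a = ∑ a ∈ s, g a) :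
    ∑ a ∈ s, |(f a : R) - g a| = 2 * ∑ a ∈ s, (f a - g a : ℕ) := by
  have hpoint : ∀ a, |(f a : R) - g a| = (f a - g a : ℕ) + (g a - f a : ℕ) := fun a => by
    rcases le_total (f a) (g a) with h | h <;>
      simp [h, Nat.cast_sub, abs_of_nonneg, abs_of_nonpos, sub_nonneg]
  have hswap : ∑ a ∈ s, (g a - f a) = ∑ a ∈ s, (f a - g a) := by
    have : ∑ a ∈ s, (f a + (g a - f a)) = ∑ a ∈ s, (g a + (f a - g a)) :=
      sum_congr rfl fun a _ => by omega
    rw [sum_add_distrib, sum_add_distrib, hsum] at this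
    omega
  simp only [hpoint, sum_add_distrib, ← Nat.cast_sum, hswap]
  ring

theorem hammingDist_update_le_one {ι β : Type*} [Fintype ι] [DecidableEq ι] [DecidableEq β]
    (x : ι → β) (i : ι) (b : β) : hammingDist x (Function.update x i b) ≤ 1 := by
  refine (card_le_card fun j hj => ?_).trans (card_singleton i).le
  by_contra hji
  simp [Function.update_of_ne (Finset.notMem_singleton.1 hji)] at hj

section LetterCount

variable {ι X : Type*} [Fintype ι] [DecidableEq X]

def letterCount (x : ι → X) (a : X) : ℕ := #{i | x i = a}

theorem sum_letterCount [Fintype X] (x : ι → X) : ∑ a, letterCount x a = Fintype.card ι :=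
  (card_eq_sum_card_fiberwise fun i _ => mem_univ (x i)).symm

theorem letterCount_update_add [DecidableEq ι] (x : ι → X) (i : ι) (b c : X) :
    letterCount (Function.update x i b) c + (if x i = c then 1 else 0) =
      letterCount x c + (if b = c then 1 else 0) := by
  simp only [letterCount, card_filter]
  rw [← add_sum_erase _ _ (mem_univ i), ← add_sum_erase _ (fun j => if x j = c then 1 else 0)
    (mem_univ i), Function.update_self,
    sum_congr rfl fun j hj => by rw [Function.update_of_ne (ne_of_mem_erase hj)]]
  ring

theorem exists_letterCount_eq_hammingDist_le [DecidableEq ι] [Fintype X] (x w : ι → X) :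
    ∃ z, letterCount z = letterCount w ∧
      hammingDist x z ≤ ∑ a, (letterCount x a - letterCount w a) := by
  induction h : ∑ a, (letterCount x a - letterCount w a) using Nat.strong_induction_on
    generalizing x with
  | _ k ih =>
    have hsum : ∑ a, letterCount x a = ∑ a, letterCount w a := by
      rw [sum_letterCount, sum_letterCount]
    by_cases hxw : letterCount x = letterCount w
    · exact ⟨x, hxw, by simp⟩
    obtain ⟨c, hc⟩ : ∃ c, letterCount x c ≠ letterCount w c := by
      by_contra! hall; exact hxw (funext hall)
    obtain ⟨a, -, ha⟩ := exists_lt_of_ne_of_sum_eq hsum.symm ⟨c, mem_univ c, hc.symm⟩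
    obtain ⟨b, -, hb⟩ := exists_lt_of_ne_of_sum_eq hsum ⟨c, mem_univ c, hc⟩
    obtain ⟨i, rfl⟩ : ∃ i, x i = a := by
      by_contra! hno
      simp [letterCount, hno] at ha
    set x' := Function.update x i b
    have hdrop : ∑ c, ((letterCount x' c - letterCount w c) + if x i = c then 1 else 0) ≤ k := by
      rw [← h]
      refine sum_le_sum fun c _ => ?_
      have : letterCount x' c + _ = _ := letterCount_update_add x i b c
      split_ifs at this ⊢ <;> subst_vars <;> omega
    rw [sum_add_distrib, sum_ite_eq, if_pos (mem_univ _)] at hdrop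
    obtain ⟨z, hz, hdist⟩ := ih _ (by omega) x' rfl
    refine ⟨z, hz, ?_⟩
    calc hammingDist x z ≤ hammingDist x x' + hammingDist x' z := hammingDist_triangle x x' z
      _ ≤ 1 + ∑ c, (letterCount x' c - letterCount w c) := by
          gcongr
          exact hammingDist_update_le_one x i b
      _ ≤ k := by omega

end LetterCount

theorem stmt_6_general {X : Type*} [Fintype X] [DecidableEq X] {n : ℕ} (hn : 0 < n)
    (Q Qb : X → ℝ) (d : ℕ)
    (hdist : ∑ a, |Q a - Qb a| = 2 * d / n)
    (hQbType : ∃ w : Fin n → X, ∀ a, emp w a = Qb a)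
    (x : Fin n → X) (hx : ∀ a, emp x a = Q a) :
    ∃ z : Fin n → X, (∀ a, emp z a = Qb a) ∧ hammingDist x z ≤ d := by
  obtain ⟨w, hw⟩ := hQbType
  obtain ⟨z, hz, hxz⟩ := exists_letterCount_eq_hammingDist_le x w
  refine ⟨z, fun a => ?_, hxz.trans_eq ?_⟩
  · rw [← hw a]
    exact congrArg (fun k : ℕ => (k : ℝ) / n) (congrFun hz a)
  · have hsum : ∑ a, letterCount x a = ∑ a, letterCount w a := by
      rw [sum_letterCount, sum_letterCount]
    have hn' : (n : ℝ) ≠ 0 := by positivity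
    have hl1 : ∑ a, |(letterCount x a : ℝ) - letterCount w a| = 2 * d := by
      simp only [← hx, ← hw, emp, ← sub_div, abs_div, ← sum_div, Nat.abs_cast] at hdist
      exact (div_left_inj' hn').1 hdist
    have : 2 * ∑ a, (letterCount x a - letterCount w a) = 2 * d := by
      exact_mod_cast (sum_abs_sub_eq_two_mul_sum_tsub hsum).symm.trans hl1
    omega

/-- If `Q, Q̄ ∈ 𝒫_n(X)` are types with variation distance `2d*/n` (`d* > 0`),
then every `x ∈ T_n(Q)` is within Hamming distance `d*` of some `z ∈ T_n(Q̄)`. -/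
theorem stmt_6 {X : Type*} [Fintype X] [DecidableEq X] {n : ℕ} (hn : 0 < n)
    (Q Qb : X → ℝ) (d : ℕ) (hd : 0 < d)
    (hdist : ∑ a, |Q a - Qb a| = 2 * d / n)
    (hQbType : ∃ w : Fin n → X, ∀ a, emp w a = Qb a)
    (x : Fin n → X) (hx : ∀ a, emp x a = Q a) :
    ∃ z : Fin n → X, (∀ a, emp z a = Qb a) ∧ hammingDist x z ≤ d :=
  stmt_6_general hn Q Qb d hdist hQbType x hx
end

section
/- The set of measures Q̃_Y on a finite alphabet Y satisfying Q̃_Y(y) ≥ 0 for all y and ∑_y Q̃_Y(y) ≤ 1 is convex, and moreover, for any fixed η ≥ 0, the image set { Q_X(x)·P_{Y|X}(y|x)^{η/(1+η)}·Q̃_Y(y)^{1/(1+η)} : Q̃_Y in this set } is also convex: if Q̃_{0,Y} and Q̃_{1,Y} are in the set and 0 ≤ α ≤ 1, then the pointwise combination ((1−α)Q̃_{0,Y}^{1/(1+η)} + α·Q̃_{1,Y}^{1/(1+η)})^{1+η} is again in the set (i.e., nonnegative with sum at most 1). -/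
/-!
With `p = 1 + η`, `f = a ^ (1/p)` and `g = b ^ (1/p)` we have `‖f‖_p ^ p = ∑ a ≤ 1` and
`‖g‖_p ^ p = ∑ b ≤ 1`, so Minkowski's inequality in `ℓ^p` gives
`‖(1 - α) f + α g‖_p ≤ (1 - α) ‖f‖_p + α ‖g‖_p ≤ 1`.
-/

open Finset

theorem convex_setOf_nonneg_sum_le_one {ι : Type*} [Fintype ι] :
    Convex ℝ {Q : ι → ℝ | (∀ i, 0 ≤ Q i) ∧ ∑ i, Q i ≤ 1} := by
  have hlin : IsLinearMap ℝ fun Q : ι → ℝ => ∑ i, Q i :=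
    ⟨fun Q R => by simp [sum_add_distrib], fun c Q => by simp [mul_sum]⟩
  exact (convex_Ici (0 : ι → ℝ)).inter (convex_halfSpace_le hlin 1)

namespace Real

variable {ι : Type*} (s : Finset ι) {p : ℝ}

theorem sum_mul_rpow_one_div_rpow {c : ℝ} (hc : 0 ≤ c) {a : ι → ℝ} (ha : ∀ i ∈ s, 0 ≤ a i)
    (hp : p ≠ 0) :
    (∑ i ∈ s, (c * a i ^ (1 / p)) ^ p) ^ (1 / p) = c * (∑ i ∈ s, a i) ^ (1 / p) := by
  have hterm : ∀ i ∈ s, (c * a i ^ (1 / p)) ^ p = c ^ p * a i := fun i hi => by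
    rw [mul_rpow hc (rpow_nonneg (ha i hi) _), one_div, rpow_inv_rpow (ha i hi) hp]
  rw [sum_congr rfl hterm, ← mul_sum, mul_rpow (rpow_nonneg hc _) (sum_nonneg ha), one_div,
    rpow_rpow_inv hc hp]

theorem Lp_mul_rpow_one_div_add_le (hp : 1 ≤ p) {c d : ℝ} (hc : 0 ≤ c) (hd : 0 ≤ d)
    {a b : ι → ℝ} (ha : ∀ i ∈ s, 0 ≤ a i) (hb : ∀ i ∈ s, 0 ≤ b i) :
    (∑ i ∈ s, (c * a i ^ (1 / p) + d * b i ^ (1 / p)) ^ p) ^ (1 / p) ≤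
      c * (∑ i ∈ s, a i) ^ (1 / p) + d * (∑ i ∈ s, b i) ^ (1 / p) := by
  have hp0 : p ≠ 0 := by positivity
  rw [← sum_mul_rpow_one_div_rpow s hc ha hp0, ← sum_mul_rpow_one_div_rpow s hd hb hp0]
  exact Lp_add_le_of_nonneg s hp (fun i hi => mul_nonneg hc (rpow_nonneg (ha i hi) _))
    (fun i hi => mul_nonneg hd (rpow_nonneg (hb i hi) _))

theorem sum_convexComb_rpow_one_div_rpow_le_one (hp : 1 ≤ p) {α : ℝ} (hα₀ : 0 ≤ α)
    (hα₁ : α ≤ 1) {a b : ι → ℝ} (ha : ∀ i ∈ s, 0 ≤ a i) (hsa : ∑ i ∈ s, a i ≤ 1)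
    (hb : ∀ i ∈ s, 0 ≤ b i) (hsb : ∑ i ∈ s, b i ≤ 1) :
    ∑ i ∈ s, ((1 - α) * a i ^ (1 / p) + α * b i ^ (1 / p)) ^ p ≤ 1 := by
  have hp0 : 0 < p := by positivity
  have hroot : (∑ i ∈ s, ((1 - α) * a i ^ (1 / p) + α * b i ^ (1 / p)) ^ p) ^ (1 / p) ≤ 1 :=
    calc _ ≤ (1 - α) * (∑ i ∈ s, a i) ^ (1 / p) + α * (∑ i ∈ s, b i) ^ (1 / p) :=
          Lp_mul_rpow_one_div_add_le s hp (by linarith) hα₀ ha hb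
      _ ≤ (1 - α) * 1 + α * 1 := by
          have hA := rpow_le_one (sum_nonneg ha) hsa (one_div_nonneg.2 hp0.le)
          have hB := rpow_le_one (sum_nonneg hb) hsb (one_div_nonneg.2 hp0.le)
          gcongr
      _ = 1 := by ring
  have hnonneg : 0 ≤ ∑ i ∈ s, ((1 - α) * a i ^ (1 / p) + α * b i ^ (1 / p)) ^ p :=
    sum_nonneg fun i hi => rpow_nonneg (add_nonneg
      (mul_nonneg (by linarith) (rpow_nonneg (ha i hi) _))
      (mul_nonneg hα₀ (rpow_nonneg (hb i hi) _))) _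
  have h := (rpow_inv_le_iff_of_pos hnonneg zero_le_one hp0).1 (by rwa [← one_div])
  rwa [one_rpow] at h

end Real

/-- The subprobability simplex on a finite alphabet is convex, and for any
`η ≥ 0` it is closed under the "geometric-mean" combination
`((1−α)·a^{1/(1+η)} + α·b^{1/(1+η)})^{1+η}`: the result is nonnegative with
sum at most 1. -/
theorem stmt_12 {Y : Type*} [Fintype Y] (η : ℝ) (hη : 0 ≤ η) :
    Convex ℝ {Q : Y → ℝ | (∀ y, 0 ≤ Q y) ∧ ∑ y, Q y ≤ 1} ∧
    ∀ a b : Y → ℝ, (∀ y, 0 ≤ a y) → ∑ y, a y ≤ 1 →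
      (∀ y, 0 ≤ b y) → ∑ y, b y ≤ 1 →
      ∀ α : ℝ, 0 ≤ α → α ≤ 1 →
        (∀ y, 0 ≤ ((1 - α) * a y ^ (1 / (1 + η))
            + α * b y ^ (1 / (1 + η))) ^ (1 + η)) ∧
        ∑ y, ((1 - α) * a y ^ (1 / (1 + η))
            + α * b y ^ (1 / (1 + η))) ^ (1 + η) ≤ 1 := by
  refine ⟨convex_setOf_nonneg_sum_le_one, fun a b ha hsa hb hsb α hα₀ hα₁ => ⟨fun y => ?_, ?_⟩⟩
  · have := ha y
    have := hb y
    have : 0 ≤ 1 - α := by linarith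
    positivity
  · exact Real.sum_convexComb_rpow_one_div_rpow_le_one univ (by linarith) hα₀ hα₁
      (fun y _ => ha y) hsa (fun y _ => hb y) hsb
end

section
/- Consider the type-dependent random binning ensemble with rate function ρ: each x ∈ X^n of type Q̂_x is assigned independently and uniformly to one of e^{nρ(Q̂_x)} bins. For a source pair (x, y) with joint type Q_{XY} (marginals Q_X, Q_Y, conditional Q_{X|Y}), the probability (over random binning) that some other sequence x̃ ≠ x in the same conditional type class T_n(Q_{X|Y}) given y falls into the same bin as x satisfies: this probability is lower bounded by (1/2)·min{1, e^{−nρ(Q_X)}·(|T_n(Q_{X|Y})| − 1)} and hence is, up to subexponential factors, at least exp(−n·[ρ(Q_X) − H(Q_{X|Y}|Q_Y)]₊), where [t]₊ = max{t,0}. -/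
open MeasureTheory Finset ENNReal

/-!
Let `N = ∑ 1_{A z}` count the colliding sequences and `S = E N`. Pairwise independence bounds
the second moment, `E N² ≤ S + S²`. Since `2tN - t²N² = 1 - (1 - tN)²` is at most `1` and
vanishes where `N = 0`, it lies below the indicator of the union; taking `t = 1 / (1 + S)` and
integrating gives `P(N > 0) ≥ S / (1 + S) ≥ ½ min(1, S)` (the Chung–Erdős inequality). The
exponential form follows from `|T| - 1 ≥ |T| / 2` and the lower bound on `|T|`.
-/

lemma half_min_one_le_div_one_add {S : ℝ} (hS : 0 ≤ S) : 1 / 2 * min 1 S ≤ S / (1 + S) := by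
  rw [le_div_iff₀ (by positivity)]
  rcases le_total S 1 with h | h
  · rw [min_eq_right h]; nlinarith
  · rw [min_eq_left h]; linarith

section PairwiseIndependentUnion

variable {Ω ι : Type*} {s : Finset ι} {A : ι → Set Ω}

lemma two_mul_sub_sq_le_indicator_biUnion (t : ℝ) (ω : Ω) :
    2 * t * ∑ i ∈ s, (A i).indicator 1 ω - t ^ 2 * (∑ i ∈ s, (A i).indicator 1 ω) ^ 2
      ≤ (⋃ i ∈ s, A i).indicator (1 : Ω → ℝ) ω := by
  by_cases hω : ω ∈ ⋃ i ∈ s, A i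
  · rw [Set.indicator_of_mem hω, Pi.one_apply]
    nlinarith [sq_nonneg (1 - t * ∑ i ∈ s, (A i).indicator (1 : Ω → ℝ) ω)]
  · have hzero : ∀ i ∈ s, (A i).indicator (1 : Ω → ℝ) ω = 0 := fun i hi =>
      Set.indicator_of_notMem (fun h => hω (Set.mem_biUnion hi h)) _
    simp [Set.indicator_of_notMem hω, sum_eq_zero hzero]

lemma sq_sum_indicator_one (ω : Ω) :
    (∑ i ∈ s, (A i).indicator (1 : Ω → ℝ) ω) ^ 2
      = ∑ p ∈ s ×ˢ s, (A p.1 ∩ A p.2).indicator 1 ω := by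
  simp [sq, sum_mul_sum, sum_product, Set.inter_indicator_one]

variable [MeasurableSpace Ω] {μ : Measure Ω}

lemma sum_sum_measureReal_inter_le
    (hindep : (s : Set ι).Pairwise fun i j ↦ μ (A i ∩ A j) = μ (A i) * μ (A j)) :
    ∑ i ∈ s, ∑ j ∈ s, μ.real (A i ∩ A j)
      ≤ ∑ i ∈ s, μ.real (A i) + (∑ i ∈ s, μ.real (A i)) ^ 2 := by
  classical
  have hrow : ∀ i ∈ s, ∑ j ∈ s, μ.real (A i ∩ A j)
      ≤ μ.real (A i) + μ.real (A i) * ∑ j ∈ s, μ.real (A j) := by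
    intro i hi
    rw [← add_sum_erase s _ hi, Set.inter_self, mul_sum]
    gcongr
    calc ∑ j ∈ s.erase i, μ.real (A i ∩ A j)
        = ∑ j ∈ s.erase i, μ.real (A i) * μ.real (A j) := by
          refine sum_congr rfl fun j hj ↦ ?_
          rw [measureReal_def, hindep hi (mem_of_mem_erase hj) (ne_of_mem_erase hj).symm,
            ENNReal.toReal_mul, measureReal_def, measureReal_def]
      _ ≤ ∑ j ∈ s, μ.real (A i) * μ.real (A j) :=
          sum_le_sum_of_subset_of_nonneg (erase_subset i s) fun _ _ _ ↦
            mul_nonneg measureReal_nonneg measureReal_nonneg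
  calc ∑ i ∈ s, ∑ j ∈ s, μ.real (A i ∩ A j)
      ≤ ∑ i ∈ s, (μ.real (A i) + μ.real (A i) * ∑ j ∈ s, μ.real (A j)) := sum_le_sum hrow
    _ = _ := by rw [sum_add_distrib, ← sum_mul, sq]

variable [IsFiniteMeasure μ]

lemma integrable_sum_indicator_one (hA : ∀ i, MeasurableSet (A i)) :
    Integrable (fun ω ↦ ∑ i ∈ s, (A i).indicator (1 : Ω → ℝ) ω) μ :=
  integrable_finsetSum s fun i _ ↦ (integrable_const 1).indicator (hA i)

lemma integral_sum_indicator_one (hA : ∀ i, MeasurableSet (A i)) :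
    ∫ ω, ∑ i ∈ s, (A i).indicator (1 : Ω → ℝ) ω ∂μ = ∑ i ∈ s, μ.real (A i) := by
  rw [integral_finsetSum s fun i _ ↦ (integrable_const 1).indicator (hA i)]
  exact sum_congr rfl fun i _ ↦ integral_indicator_one (hA i)

lemma integral_sq_sum_indicator_one_le (hA : ∀ i, MeasurableSet (A i))
    (hindep : (s : Set ι).Pairwise fun i j ↦ μ (A i ∩ A j) = μ (A i) * μ (A j)) :
    ∫ ω, (∑ i ∈ s, (A i).indicator (1 : Ω → ℝ) ω) ^ 2 ∂μ
      ≤ ∑ i ∈ s, μ.real (A i) + (∑ i ∈ s, μ.real (A i)) ^ 2 := by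
  simp_rw [sq_sum_indicator_one]
  rw [integral_sum_indicator_one (A := fun p : ι × ι ↦ A p.1 ∩ A p.2) fun p ↦ (hA p.1).inter (hA p.2), sum_product]
  exact sum_sum_measureReal_inter_le hindep

theorem half_min_one_sum_measureReal_le_measureReal_biUnion (hA : ∀ i, MeasurableSet (A i))
    (hindep : (s : Set ι).Pairwise fun i j ↦ μ (A i ∩ A j) = μ (A i) * μ (A j)) :
    1 / 2 * min 1 (∑ i ∈ s, μ.real (A i)) ≤ μ.real (⋃ i ∈ s, A i) := by
  set S := ∑ i ∈ s, μ.real (A i)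
  set N : Ω → ℝ := fun ω ↦ ∑ i ∈ s, (A i).indicator 1 ω
  have hS : 0 ≤ S := sum_nonneg fun _ _ ↦ measureReal_nonneg
  have hN : Integrable N μ := integrable_sum_indicator_one hA
  have hN2 : Integrable (fun ω ↦ N ω ^ 2) μ := by
    simp_rw [N, sq_sum_indicator_one]
    exact integrable_sum_indicator_one fun p ↦ (hA p.1).inter (hA p.2)
  have hU : MeasurableSet (⋃ i ∈ s, A i) := s.measurableSet_biUnion fun i _ ↦ hA i
  set t := (1 + S)⁻¹
  calc 1 / 2 * min 1 S ≤ S / (1 + S) := half_min_one_le_div_one_add hS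
    _ = 2 * t * S - t ^ 2 * (S + S ^ 2) := by simp only [t]; field_simp; ring
    _ ≤ 2 * t * ∫ ω, N ω ∂μ - t ^ 2 * ∫ ω, N ω ^ 2 ∂μ := by
        rw [integral_sum_indicator_one hA]
        gcongr
        exact integral_sq_sum_indicator_one_le hA hindep
    _ = ∫ ω, (2 * t * N ω - t ^ 2 * N ω ^ 2) ∂μ := by
        rw [integral_sub (hN.const_mul _) (hN2.const_mul _), integral_const_mul, integral_const_mul]
    _ ≤ ∫ ω, (⋃ i ∈ s, A i).indicator 1 ω ∂μ :=
        integral_mono ((hN.const_mul _).sub (hN2.const_mul _))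
          ((integrable_const 1).indicator hU) (two_mul_sub_sq_le_indicator_biUnion t)
    _ = μ.real (⋃ i ∈ s, A i) := integral_indicator_one hU

end PairwiseIndependentUnion

lemma exp_neg_mul_max_sub_zero_eq_min {n : ℝ} (hn : 0 ≤ n) (ρ H : ℝ) :
    Real.exp (-n * max (ρ - H) 0) = min 1 (Real.exp (-n * ρ) * Real.exp (n * H)) := by
  rw [← Real.exp_add]
  rcases le_total (ρ - H) 0 with h | h
  · rw [max_eq_right h, mul_zero, Real.exp_zero, min_eq_left (Real.one_le_exp (by nlinarith))]
  · rw [max_eq_left h, min_eq_right (Real.exp_le_one_iff.mpr (by nlinarith))]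
    ring_nf

lemma quarter_mul_min_le_half_mul_min {a p b N : ℝ} (ha0 : 0 ≤ a) (ha1 : a ≤ 1) (hp : 0 ≤ p)
    (hab : a * b ≤ N) (hN : 2 ≤ N) :
    1 / 4 * a * min 1 (p * b) ≤ 1 / 2 * min 1 (p * (N - 1)) := by
  rw [mul_assoc, mul_min_of_nonneg _ _ ha0, mul_min_of_nonneg _ _ (by norm_num : (0 : ℝ) ≤ 1 / 4),
    mul_min_of_nonneg _ _ (by norm_num : (0 : ℝ) ≤ 1 / 2)]
  exact min_le_min (by linarith) (by nlinarith)

theorem stmt_19_general {X Y : Type*} [Fintype X] [Fintype Y] [DecidableEq X]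
    {Ω : Type*} [MeasurableSpace Ω] (μ : Measure Ω) [IsProbabilityMeasure μ]
    (n : ℕ) (ρ H : ℝ)
    (T : Finset (Fin n → X)) (x : Fin n → X) (hxT : x ∈ T)
    (A : (Fin n → X) → Set Ω) (hA : ∀ z, MeasurableSet (A z))
    (hprob : ∀ z ∈ T.erase x, μ (A z) = ENNReal.ofReal (Real.exp (-(n : ℝ) * ρ)))
    (hpair : ∀ z ∈ T.erase x, ∀ z' ∈ T.erase x, z ≠ z' →
      μ (A z ∩ A z') = μ (A z) * μ (A z'))
    (hT : ((n : ℝ) + 1) ^ (-((Fintype.card X * Fintype.card Y : ℕ) : ℝ))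
        * Real.exp ((n : ℝ) * H) ≤ (T.card : ℝ))
    (hT2 : 2 ≤ T.card) :
    ENNReal.ofReal ((1 / 2) * min 1
        (Real.exp (-(n : ℝ) * ρ) * ((T.card : ℝ) - 1)))
      ≤ μ (⋃ z ∈ T.erase x, A z) ∧
    ENNReal.ofReal ((1 / 4)
        * ((n : ℝ) + 1) ^ (-((Fintype.card X * Fintype.card Y : ℕ) : ℝ))
        * Real.exp (-(n : ℝ) * max (ρ - H) 0))
      ≤ μ (⋃ z ∈ T.erase x, A z) := by
  have hcard : ((T.erase x).card : ℝ) = T.card - 1 := by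
    rw [card_erase_of_mem hxT, Nat.cast_sub (by omega), Nat.cast_one]
  have hsum : ∑ z ∈ T.erase x, μ.real (A z) = Real.exp (-(n : ℝ) * ρ) * (T.card - 1) := by
    rw [sum_congr rfl fun z hz ↦ by
        rw [measureReal_def, hprob z hz, ENNReal.toReal_ofReal (Real.exp_pos _).le],
      sum_const, nsmul_eq_mul, hcard, mul_comm]
  have hunion := half_min_one_sum_measureReal_le_measureReal_biUnion (μ := μ) (s := T.erase x) hA
    fun z hz z' hz' hne ↦ hpair z hz z' hz' hne
  rw [hsum] at hunion
  have hfirst := ENNReal.ofReal_le_of_le_toReal hunion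
  refine ⟨hfirst, le_trans (ENNReal.ofReal_le_ofReal ?_) hfirst⟩
  rw [exp_neg_mul_max_sub_zero_eq_min (Nat.cast_nonneg n)]
  have hpoly : ((n : ℝ) + 1) ^ (-((Fintype.card X * Fintype.card Y : ℕ) : ℝ)) ≤ 1 :=
    Real.rpow_le_one_of_one_le_of_nonpos (le_add_of_nonneg_left (Nat.cast_nonneg n))
      (neg_nonpos.mpr (Nat.cast_nonneg _))
  exact quarter_mul_min_le_half_mul_min (by positivity) hpoly (Real.exp_pos _).le hT
    (by exact_mod_cast hT2)

/-- Random-binning collision probability bound. `T` abstracts the conditional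
type class `T_n(Q_{X|Y})` containing the source block `x`; `A x̃` is the event
that `x̃` is assigned to the same bin as `x`, which happens with probability
`e^{−nρ(Q_X)}`, and these events are pairwise independent for distinct
`x̃ ≠ x`. Then the probability that some `x̃ ≠ x` in `T` collides with `x` is
at least `(1/2)·min{1, e^{−nρ}(|T|−1)}`, and — using the type-class size bound
`(n+1)^{−|X||Y|} e^{nH} ≤ |T|` (and `|T| ≥ 2`) — at least
`(1/4)(n+1)^{−|X||Y|}·exp(−n·[ρ−H]₊)`. -/
theorem stmt_19 {X Y : Type*} [Fintype X] [Fintype Y] [DecidableEq X]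
    {Ω : Type*} [MeasurableSpace Ω] (μ : Measure Ω) [IsProbabilityMeasure μ]
    (n : ℕ) (hn : 0 < n) (ρ H : ℝ)
    (T : Finset (Fin n → X)) (x : Fin n → X) (hxT : x ∈ T)
    (A : (Fin n → X) → Set Ω) (hA : ∀ z, MeasurableSet (A z))
    (hprob : ∀ z ∈ T.erase x, μ (A z) = ENNReal.ofReal (Real.exp (-(n : ℝ) * ρ)))
    (hpair : ∀ z ∈ T.erase x, ∀ z' ∈ T.erase x, z ≠ z' →
      μ (A z ∩ A z') = μ (A z) * μ (A z'))
    (hT : ((n : ℝ) + 1) ^ (-((Fintype.card X * Fintype.card Y : ℕ) : ℝ))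
        * Real.exp ((n : ℝ) * H) ≤ (T.card : ℝ))
    (hT2 : 2 ≤ T.card) :
    ENNReal.ofReal ((1 / 2) * min 1
        (Real.exp (-(n : ℝ) * ρ) * ((T.card : ℝ) - 1)))
      ≤ μ (⋃ z ∈ T.erase x, A z) ∧
    ENNReal.ofReal ((1 / 4)
        * ((n : ℝ) + 1) ^ (-((Fintype.card X * Fintype.card Y : ℕ) : ℝ))
        * Real.exp (-(n : ℝ) * max (ρ - H) 0))
      ≤ μ (⋃ z ∈ T.erase x, A z) :=
  stmt_19_general μ n ρ H T x hxT A hA hprob hpair hT hT2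
end
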